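/- Every simple polygon P in ℝ² has an inscribed right isosceles triangle: there exist three distinct points y, z, u ∈ P with |z − y| = |u − y| and ⟪z − y, u − y⟫ = 0. -/

import Mathlib

/-!
Let `a` be the midpoint of an edge `[p, q]` of `P` and `R` the rotation by `π/2` about `a`;
it suffices to find `z ∈ P \ {a}` with `R z ∈ P`, as `a, z, R z` is then the triangle.
Suppose there is none. Count modulo 2 the edges crossed by the ray from a point in a fixed
direction parallel to no edge. This parity is locally constant off `P`: when the ray sweeps over
a vertex, the counts of the two edges at that vertex change together. Hence it is constant on
`R (P \ {a})`, which is connected because `P \ {a}` is an arc. But `R (P \ {a})` contains the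
images of `a ± μ (q - p)`, which for small `μ > 0` lie close to `a` on the two sides of `[p, q]`,
where the parity differs.
-/

open scoped RealInnerProductSpace

noncomputable section

/-- The Euclidean plane. -/
abbrev Pt := EuclideanSpace ℝ (Fin 2)

/-- Counterclockwise rotation of a vector by `π/2`: `(x, y) ↦ (-y, x)`. -/
def rotCCW (w : Pt) : Pt := (WithLp.equiv 2 (Fin 2 → ℝ)).symm ![-w 1, w 0]

/-- Clockwise rotation of a vector by `π/2`: `(x, y) ↦ (y, -x)`. -/
def rotCW (w : Pt) : Pt := (WithLp.equiv 2 (Fin 2 → ℝ)).symm ![w 1, -w 0]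

/-- `v : ZMod n → Pt` (with `3 ≤ n`) is a simple polygon: consecutive vertices are
distinct, consecutive edges meet exactly in their common vertex, and
non-consecutive edges are disjoint. -/
def IsSimplePolygon {n : ℕ} (v : ZMod n → Pt) : Prop :=
  3 ≤ n ∧
  (∀ i, v i ≠ v (i + 1)) ∧
  (∀ i : ZMod n,
    segment ℝ (v i) (v (i + 1)) ∩ segment ℝ (v (i + 1)) (v (i + 2)) = {v (i + 1)}) ∧
  (∀ i j : ZMod n, i ≠ j → i ≠ j + 1 → j ≠ i + 1 →
    segment ℝ (v i) (v (i + 1)) ∩ segment ℝ (v j) (v (j + 1)) = ∅)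

/-- The polygon itself: the union of its edges. -/
def polygonSet {n : ℕ} (v : ZMod n → Pt) : Set Pt :=
  ⋃ i : ZMod n, segment ℝ (v i) (v (i + 1))

open Filter Set Topology

section Rotation

lemma rotCCW_apply_zero (w : Pt) : rotCCW w 0 = -w 1 := by simp [rotCCW]

lemma rotCCW_apply_one (w : Pt) : rotCCW w 1 = w 0 := by simp [rotCCW]

def rotCCWLinear : Pt →ₗ[ℝ] Pt where
  toFun := rotCCW
  map_add' x y := by ext i; fin_cases i <;> simp [rotCCW]; ring
  map_smul' c x := by ext i; fin_cases i <;> simp [rotCCW]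

@[fun_prop]
lemma continuous_rotCCW : Continuous rotCCW :=
  rotCCWLinear.continuous_of_finiteDimensional

lemma rotCCW_smul (c : ℝ) (w : Pt) : rotCCW (c • w) = c • rotCCW w :=
  rotCCWLinear.map_smul c w

lemma norm_rotCCW (w : Pt) : ‖rotCCW w‖ = ‖w‖ := by
  rw [EuclideanSpace.norm_eq, EuclideanSpace.norm_eq, Fin.sum_univ_two, Fin.sum_univ_two,
    rotCCW_apply_zero, rotCCW_apply_one, norm_neg, add_comm]

lemma inner_rotCCW_self (w : Pt) : ⟪w, rotCCW w⟫ = 0 := by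
  simp [PiLp.inner_apply, Fin.sum_univ_two, rotCCW_apply_zero, rotCCW_apply_one]
  ring

lemma right_isosceles_rotCCW {a z : Pt} (h : z ≠ a) :
    a ≠ z ∧ a ≠ a + rotCCW (z - a) ∧ z ≠ a + rotCCW (z - a) ∧
      ‖z - a‖ = ‖a + rotCCW (z - a) - a‖ ∧ ⟪z - a, a + rotCCW (z - a) - a⟫ = 0 := by
  have hw : z - a ≠ 0 := sub_ne_zero.mpr h
  rw [add_sub_cancel_left, norm_rotCCW, inner_rotCCW_self]
  refine ⟨h.symm, fun h' => hw ?_, fun h' => hw ?_, rfl, rfl⟩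
  · rw [← norm_eq_zero, ← norm_rotCCW, left_eq_add.mp h', norm_zero]
  · rw [← inner_self_eq_zero (𝕜 := ℝ)]
    nth_rw 2 [sub_eq_of_eq_add' h']
    exact inner_rotCCW_self _

lemma midpoint_add_rotCCW_lineMap_sub (p q : Pt) (s : ℝ) :
    midpoint ℝ p q + rotCCW (AffineMap.lineMap p q s - midpoint ℝ p q) =
      midpoint ℝ p q + (s - 2⁻¹) • rotCCW (q - p) := by
  rw [← rotCCW_smul, midpoint, AffineMap.lineMap_apply_module', AffineMap.lineMap_apply_module',
    invOf_eq_inv, sub_smul]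
  abel_nf

end Rotation

section ShearCoord

/-- Its level sets are the lines of direction `(-t, 1)`. -/
def shearCoord (t : ℝ) : Pt →L[ℝ] ℝ := EuclideanSpace.proj 0 + t • EuclideanSpace.proj 1

lemma shearCoord_apply (t : ℝ) (x : Pt) : shearCoord t x = x 0 + t * x 1 := by
  simp [shearCoord]

lemma eq_of_shearCoord_eq {t : ℝ} {x y : Pt} (h : shearCoord t x = shearCoord t y)
    (h1 : x 1 = y 1) : x = y := by
  have h0 : x 0 = y 0 := by simp only [shearCoord_apply, h1] at h; linarith
  ext i; fin_cases i <;> assumption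

lemma exists_shearCoord_ne {ι : Type*} [Finite ι] {p q : ι → Pt} (h : ∀ i, p i ≠ q i) :
    ∃ t : ℝ, ∀ i, shearCoord t (p i) ≠ shearCoord t (q i) := by
  have hbad : ∀ i, {t : ℝ | shearCoord t (p i) = shearCoord t (q i)}.Subsingleton := by
    intro i t₁ h₁ t₂ h₂
    by_contra hne
    simp only [mem_ofPred_eq, shearCoord_apply] at h₁ h₂
    have h1 : p i 1 = q i 1 := by
      have : (t₁ - t₂) * (p i 1 - q i 1) = 0 := by linarith
      rcases mul_eq_zero.mp this with h | h
      · exact absurd (sub_eq_zero.mp h) hne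
      · exact sub_eq_zero.mp h
    exact h i (eq_of_shearCoord_eq (t := t₁) h₁ h1)
  obtain ⟨t, ht⟩ := (finite_iUnion fun i => (hbad i).finite).infinite_compl.nonempty
  exact ⟨t, fun i hi => ht (mem_iUnion.mpr ⟨i, hi⟩)⟩

lemma eq_left_of_mem_segment_of_shearCoord_eq {t : ℝ} {p q x : Pt}
    (hpq : shearCoord t p ≠ shearCoord t q) (hx : x ∈ segment ℝ p q)
    (h : shearCoord t x = shearCoord t p) : x = p := by
  obtain ⟨α, β, -, -, hαβ, rfl⟩ := hx
  have hβ : β = 0 := by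
    rw [map_add, map_smul, map_smul, smul_eq_mul, smul_eq_mul] at h
    have : β * (shearCoord t q - shearCoord t p) = 0 := by
      linear_combination h - shearCoord t p * hαβ
    exact (mul_eq_zero.mp this).resolve_right (sub_ne_zero.mpr hpq.symm)
  simp [hβ, show α = 1 by linarith]

lemma eq_right_of_mem_segment_of_shearCoord_eq {t : ℝ} {p q x : Pt}
    (hpq : shearCoord t p ≠ shearCoord t q) (hx : x ∈ segment ℝ p q)
    (h : shearCoord t x = shearCoord t q) : x = q :=
  eq_left_of_mem_segment_of_shearCoord_eq hpq.symm (segment_symm ℝ p q ▸ hx) h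

end ShearCoord

section EdgeCrossing

def stepAt (t : ℝ) (p x : Pt) : ZMod 2 := if shearCoord t p ≤ shearCoord t x then 1 else 0

def lineSide (t : ℝ) (p q x : Pt) : ℝ :=
  (shearCoord t q - shearCoord t p) *
    ((shearCoord t q - shearCoord t p) * (x 1 - p 1) -
      (q 1 - p 1) * (shearCoord t x - shearCoord t p))

/-- When `shearCoord t p ≠ shearCoord t q`, this is `1` iff the ray from `x` in direction
`(-t, 1)` crosses `[p, q]`, the endpoint with the larger `shearCoord t` not being counted:
`lineSide t p q x < 0` says that `x` lies strictly below the line `pq` in that direction. -/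
def edgeCrossing (t : ℝ) (p q x : Pt) : ZMod 2 :=
  if lineSide t p q x < 0 then stepAt t p x + stepAt t q x else 0

/-- The jump of `stepAt t r` near `x`; it is nonzero only if the vertex `r` lies on the ray
from `x`. -/
def vertexJump (t : ℝ) (x r y : Pt) : ZMod 2 :=
  if shearCoord t r = shearCoord t x ∧ x 1 < r 1 then stepAt t r y + 1 else 0

variable {t : ℝ} {p q x : Pt}

lemma continuous_lineSide : Continuous (lineSide t p q) := by
  unfold lineSide
  fun_prop

lemma lineSide_of_shearCoord_eq_left (h : shearCoord t x = shearCoord t p) :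
    lineSide t p q x = (shearCoord t q - shearCoord t p) ^ 2 * (x 1 - p 1) := by
  unfold lineSide; rw [h]; ring

lemma lineSide_of_shearCoord_eq_right (h : shearCoord t x = shearCoord t q) :
    lineSide t p q x = (shearCoord t q - shearCoord t p) ^ 2 * (x 1 - q 1) := by
  unfold lineSide; rw [h]; ring

lemma mem_segment_of_lineSide_eq_zero (hpq : shearCoord t p ≠ shearCoord t q)
    (h : lineSide t p q x = 0) (hx : shearCoord t x ∈ uIcc (shearCoord t p) (shearCoord t q)) :
    x ∈ segment ℝ p q := by
  rw [← segment_eq_uIcc] at hx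
  obtain ⟨α, β, hα, hβ, hαβ, hξ⟩ := hx
  refine ⟨α, β, hα, hβ, hαβ, eq_of_shearCoord_eq (t := t) ?_ ?_⟩
  · simp only [map_add, map_smul, hξ]
  · have hne : shearCoord t q - shearCoord t p ≠ 0 := sub_ne_zero.mpr hpq.symm
    obtain rfl : α = 1 - β := by linarith
    simp only [smul_eq_mul] at hξ
    unfold lineSide at h
    rw [← hξ] at h
    apply mul_left_cancel₀ hne
    simp only [PiLp.add_apply, PiLp.smul_apply, smul_eq_mul]
    linear_combination -(mul_eq_zero.mp h).resolve_left hne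

lemma eventually_stepAt_eq (h : shearCoord t p ≠ shearCoord t x) :
    ∀ᶠ y in 𝓝 x, stepAt t p y = stepAt t p x := by
  have hξ := (shearCoord t).continuous.continuousAt (x := x)
  rcases h.lt_or_gt with h | h
  · filter_upwards [continuousAt_const.eventually_lt hξ h] with y hy
    simp [stepAt, hy.le, h.le]
  · filter_upwards [hξ.eventually_lt continuousAt_const h] with y hy
    simp [stepAt, not_le.mpr hy, not_le.mpr h]

lemma eventually_stepAt_eq_add_vertexJump (hp : shearCoord t p = shearCoord t x → x 1 < p 1) :
    ∀ᶠ y in 𝓝 x, stepAt t p y = stepAt t p x + vertexJump t x p y := by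
  by_cases h : shearCoord t p = shearCoord t x
  · have hx : stepAt t p x = 1 := by simp [stepAt, h]
    refine Eventually.of_forall fun y => ?_
    simp only [vertexJump, if_pos (And.intro h (hp h)), hx]
    generalize stepAt t p y = a
    revert a; decide
  · filter_upwards [eventually_stepAt_eq h] with y hy
    simp [vertexJump, h, hy]

lemma stepAt_eq_of_shearCoord_notMem_uIcc
    (h : shearCoord t x ∉ uIcc (shearCoord t p) (shearCoord t q)) :
    shearCoord t p ≠ shearCoord t x ∧ shearCoord t q ≠ shearCoord t x ∧
      stepAt t p x = stepAt t q x := by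
  simp only [mem_uIcc, not_or, not_and, not_le] at h
  refine ⟨fun h' => (h.2 (h.1 h'.le).le).ne h', fun h' => (h.1 (h.2 h'.le).le).ne h', ?_⟩
  rcases le_or_gt (shearCoord t p) (shearCoord t x) with hp | hp
  · simp [stepAt, hp, (h.1 hp).le]
  · have hq : shearCoord t x < shearCoord t q := lt_of_not_ge fun hq => (h.2 hq).asymm hp
    simp [stepAt, not_le.mpr hp, not_le.mpr hq]

lemma eventually_edgeCrossing_eq (hpq : shearCoord t p ≠ shearCoord t q)
    (hx : x ∉ segment ℝ p q) :
    ∀ᶠ y in 𝓝 x, edgeCrossing t p q y =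
      edgeCrossing t p q x + vertexJump t x p y + vertexJump t x q y := by
  have hsq : 0 < (shearCoord t q - shearCoord t p) ^ 2 := by
    have := sub_ne_zero.mpr hpq.symm; positivity
  rcases lt_trichotomy (lineSide t p q x) 0 with hneg | hzero | hpos
  · have hp (h : shearCoord t p = shearCoord t x) : x 1 < p 1 := by
      rw [lineSide_of_shearCoord_eq_left h.symm] at hneg; nlinarith
    have hq (h : shearCoord t q = shearCoord t x) : x 1 < q 1 := by
      rw [lineSide_of_shearCoord_eq_right h.symm] at hneg; nlinarith
    filter_upwards [continuous_lineSide.continuousAt.eventually_lt continuousAt_const hneg,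
      eventually_stepAt_eq_add_vertexJump hp, eventually_stepAt_eq_add_vertexJump hq]
      with y hy hyp hyq
    simp only [edgeCrossing, if_pos hy, if_pos hneg, hyp, hyq]
    ring
  · obtain ⟨hp, hq, hstep⟩ := stepAt_eq_of_shearCoord_notMem_uIcc
      fun h => hx (mem_segment_of_lineSide_eq_zero hpq hzero h)
    filter_upwards [eventually_stepAt_eq hp, eventually_stepAt_eq hq] with y hyp hyq
    simp [edgeCrossing, vertexJump, hyp, hyq, hstep, hp, hq, CharTwo.add_self_eq_zero]
  · have hp : ¬(shearCoord t p = shearCoord t x ∧ x 1 < p 1) := fun h => by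
      rw [lineSide_of_shearCoord_eq_left h.1.symm] at hpos; nlinarith
    have hq : ¬(shearCoord t q = shearCoord t x ∧ x 1 < q 1) := fun h => by
      rw [lineSide_of_shearCoord_eq_right h.1.symm] at hpos; nlinarith
    filter_upwards [continuousAt_const.eventually_lt continuous_lineSide.continuousAt hpos]
      with y hy
    simp [edgeCrossing, vertexJump, not_lt.mpr hy.le, not_lt.mpr hpos.le, hp, hq]

lemma lineSide_midpoint_add_smul_rotCCW (s : ℝ) :
    lineSide t p q (midpoint ℝ p q + s • rotCCW (q - p)) =
      s * ((shearCoord t q - shearCoord t p) * ‖q - p‖ ^ 2) := by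
  rw [EuclideanSpace.norm_sq_eq, Fin.sum_univ_two]
  simp [lineSide, shearCoord_apply, midpoint_eq_smul_add, rotCCW_apply_zero, rotCCW_apply_one]
  ring

lemma eventually_stepAt_add_stepAt_midpoint (hpq : shearCoord t p ≠ shearCoord t q) :
    ∀ᶠ y in 𝓝 (midpoint ℝ p q), stepAt t p y + stepAt t q y = 1 := by
  have hm : shearCoord t (midpoint ℝ p q) = (shearCoord t p + shearCoord t q) / 2 := by
    simp [midpoint_eq_smul_add]; ring
  have hp : shearCoord t p ≠ shearCoord t (midpoint ℝ p q) := by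
    rw [hm]; intro h; apply hpq; linarith
  have hq : shearCoord t q ≠ shearCoord t (midpoint ℝ p q) := by
    rw [hm]; intro h; apply hpq; linarith
  filter_upwards [eventually_stepAt_eq hp, eventually_stepAt_eq hq] with y hyp hyq
  rw [hyp, hyq, stepAt, stepAt, hm]
  rcases hpq.lt_or_gt with h | h
  · rw [if_pos (by linarith), if_neg (by linarith)]; rfl
  · rw [if_neg (by linarith), if_pos (by linarith)]; rfl

lemma tendsto_add_smul_nhdsGT {E : Type*} [AddCommGroup E] [Module ℝ E] [TopologicalSpace E]
    [ContinuousAdd E] [ContinuousSMul ℝ E] (x w : E) :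
    Tendsto (fun μ : ℝ => x + μ • w) (𝓝[>] 0) (𝓝 x) := by
  have h : Continuous fun μ : ℝ => x + μ • w := by fun_prop
  simpa using (h.tendsto 0).mono_left nhdsWithin_le_nhds

lemma eventually_edgeCrossing_midpoint_ne (hpq : shearCoord t p ≠ shearCoord t q) :
    ∀ᶠ μ in 𝓝[>] (0 : ℝ),
      edgeCrossing t p q (midpoint ℝ p q + μ • rotCCW (q - p)) ≠
        edgeCrossing t p q (midpoint ℝ p q - μ • rotCCW (q - p)) := by
  obtain ⟨c, hc, hside⟩ : ∃ c ≠ 0, ∀ s : ℝ,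
      lineSide t p q (midpoint ℝ p q + s • rotCCW (q - p)) = s * c := by
    have : q - p ≠ 0 := sub_ne_zero.mpr fun h => hpq (h ▸ rfl)
    exact ⟨_, mul_ne_zero (sub_ne_zero.mpr hpq.symm) (by positivity),
      lineSide_midpoint_add_smul_rotCCW⟩
  have hstep := eventually_stepAt_add_stepAt_midpoint hpq
  filter_upwards [(tendsto_add_smul_nhdsGT _ _).eventually hstep,
    (tendsto_add_smul_nhdsGT _ (-rotCCW (q - p))).eventually hstep, self_mem_nhdsWithin]
    with μ hplus hminus (hμ : 0 < μ)
  rw [smul_neg, ← sub_eq_add_neg] at hminus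
  have hside' := hside (-μ)
  rw [neg_smul, ← sub_eq_add_neg] at hside'
  rw [edgeCrossing, edgeCrossing, hside, hside', hplus, hminus]
  rcases hc.lt_or_gt with hc | hc
  · rw [if_pos (by nlinarith), if_neg (by nlinarith)]; decide
  · rw [if_neg (by nlinarith), if_pos (by nlinarith)]; decide

end EdgeCrossing

section CrossingParity

variable {n : ℕ} [NeZero n] {v : ZMod n → Pt} {t : ℝ}

variable (v t) in
def crossingParity (x : Pt) : ZMod 2 :=
  ∑ i, edgeCrossing t (v i) (v (i + 1)) x

lemma sum_vertexJump_succ (ht : ∀ i, shearCoord t (v i) ≠ shearCoord t (v (i + 1)))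
    {x : Pt} {S : Finset (ZMod n)} (hS : ∀ i, i ∈ S ↔ x ∉ segment ℝ (v i) (v (i + 1)))
    (y : Pt) :
    ∑ i ∈ S, vertexJump t x (v (i + 1)) y = ∑ i ∈ S, vertexJump t x (v i) y := by
  -- A nonzero jump comes from a vertex `v k ≠ x` on the ray from `x`; as no edge is parallel to
  -- the ray, neither edge at `v k` contains `x`.
  have hjump : ∀ k, vertexJump t x (v k) y ≠ 0 → k ∈ S ∧ k - 1 ∈ S := by
    intro k hk
    obtain ⟨hξ, h1⟩ : shearCoord t (v k) = shearCoord t x ∧ x 1 < v k 1 := by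
      by_contra h; simp [vertexJump, h] at hk
    have hxk : x ≠ v k := by rintro rfl; exact lt_irrefl _ h1
    refine ⟨(hS k).2 fun hx => hxk ?_, (hS (k - 1)).2 fun hx => hxk ?_⟩
    · exact eq_left_of_mem_segment_of_shearCoord_eq (ht k) hx hξ.symm
    · have hk := ht (k - 1)
      rw [sub_add_cancel] at hk hx
      exact eq_right_of_mem_segment_of_shearCoord_eq hk hx hξ.symm
  have hsum (f : ZMod n → ZMod 2) (hf : ∀ k, f k ≠ 0 → k ∈ S) :
      ∑ i ∈ S, f i = ∑ i, f i :=
    Finset.sum_subset (Finset.subset_univ S) fun i _ hi => by_contra (hi ∘ hf i)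
  rw [hsum _ fun i hi => by simpa using (hjump _ hi).2, hsum _ fun i hi => (hjump i hi).1]
  exact Fintype.sum_equiv (Equiv.addRight 1) _ _ fun _ => rfl

lemma eventually_sum_edgeCrossing_eq (ht : ∀ i, shearCoord t (v i) ≠ shearCoord t (v (i + 1)))
    {x : Pt} {S : Finset (ZMod n)} (hS : ∀ i, i ∈ S ↔ x ∉ segment ℝ (v i) (v (i + 1))) :
    ∀ᶠ y in 𝓝 x, ∑ i ∈ S, edgeCrossing t (v i) (v (i + 1)) y =
      ∑ i ∈ S, edgeCrossing t (v i) (v (i + 1)) x := by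
  have h := (eventually_all_finset S).2 fun i hi => eventually_edgeCrossing_eq (ht i) ((hS i).1 hi)
  filter_upwards [h] with y hy
  rw [Finset.sum_congr rfl hy, Finset.sum_add_distrib, Finset.sum_add_distrib,
    sum_vertexJump_succ ht hS, add_assoc, CharTwo.add_self_eq_zero, add_zero]

lemma continuousAt_crossingParity (ht : ∀ i, shearCoord t (v i) ≠ shearCoord t (v (i + 1)))
    {x : Pt} (hx : x ∉ polygonSet v) : ContinuousAt (crossingParity v t) x := by
  rw [ContinuousAt, nhds_discrete (ZMod 2), tendsto_pure]
  exact eventually_sum_edgeCrossing_eq ht fun i =>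
    iff_of_true (Finset.mem_univ i) fun h => hx (mem_iUnion.2 ⟨i, h⟩)

lemma eventually_crossingParity_midpoint_ne
    (ht : ∀ i, shearCoord t (v i) ≠ shearCoord t (v (i + 1))) {i : ZMod n}
    (hi : ∀ j, midpoint ℝ (v i) (v (i + 1)) ∈ segment ℝ (v j) (v (j + 1)) → j = i) :
    ∀ᶠ μ in 𝓝[>] (0 : ℝ),
      crossingParity v t (midpoint ℝ (v i) (v (i + 1)) + μ • rotCCW (v (i + 1) - v i)) ≠
        crossingParity v t (midpoint ℝ (v i) (v (i + 1)) - μ • rotCCW (v (i + 1) - v i)) := by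
  have hrest := eventually_sum_edgeCrossing_eq (S := Finset.univ.erase i) ht fun j => by
    rw [Finset.mem_erase, and_iff_left (Finset.mem_univ j)]
    exact ⟨fun hj hm => hj (hi j hm), fun hm hj => hm (hj ▸ midpoint_mem_segment _ _)⟩
  filter_upwards [eventually_edgeCrossing_midpoint_ne (ht i),
    (tendsto_add_smul_nhdsGT _ (rotCCW (v (i + 1) - v i))).eventually hrest,
    (tendsto_add_smul_nhdsGT _ (-rotCCW (v (i + 1) - v i))).eventually hrest]
    with μ hflip hplus hminus
  rw [smul_neg, ← sub_eq_add_neg] at hminus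
  simp only [crossingParity, ← Finset.add_sum_erase _ _ (Finset.mem_univ i), hplus, hminus]
  intro h
  exact hflip (add_right_cancel h)

end CrossingParity

section Connectedness

lemma isPreconnected_biUnion_segment {E : Type*} [AddCommGroup E] [Module ℝ E]
    [TopologicalSpace E] [ContinuousAdd E] [ContinuousSMul ℝ E] (w : ℕ → E) (a b : ℕ) :
    IsPreconnected (⋃ j ∈ Ico a b, segment ℝ (w j) (w (j + 1))) :=
  IsPreconnected.biUnion_of_chain ordConnected_Ico (fun _ _ => (convex_segment _ _).isPreconnected)
    fun j _ _ => ⟨w (j + 1), right_mem_segment ℝ _ _, left_mem_segment ℝ _ _⟩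

variable {n : ℕ} {v : ZMod n → Pt}

lemma IsSimplePolygon.eq_of_mem_segment (hP : IsSimplePolygon v)
    {i j : ZMod n} {x : Pt} (hi : x ∈ segment ℝ (v i) (v (i + 1)))
    (hj : x ∈ segment ℝ (v j) (v (j + 1))) (hx : x ≠ v i) (hx' : x ≠ v (i + 1)) :
    j = i := by
  obtain ⟨-, -, hadj, hdisj⟩ := hP
  by_contra hji
  by_cases h₁ : j = i + 1
  · have hmem : x ∈ segment ℝ (v i) (v (i + 1)) ∩ segment ℝ (v (i + 1)) (v (i + 2)) :=
      ⟨hi, by rwa [show i + 2 = j + 1 by rw [h₁]; ring, ← h₁]⟩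
    rw [hadj i] at hmem
    exact hx' hmem
  by_cases h₂ : i = j + 1
  · have hmem : x ∈ segment ℝ (v j) (v (j + 1)) ∩ segment ℝ (v (j + 1)) (v (j + 2)) :=
      ⟨hj, by rwa [show j + 2 = i + 1 by rw [h₂]; ring, ← h₂]⟩
    rw [hadj j, ← h₂] at hmem
    exact hx hmem
  · have hmem : x ∈ segment ℝ (v i) (v (i + 1)) ∩ segment ℝ (v j) (v (j + 1)) :=
      ⟨hi, hj⟩
    rw [hdisj i j (Ne.symm hji) h₂ h₁] at hmem
    exact hmem

lemma IsSimplePolygon.eq_of_midpoint_mem_segment (hP : IsSimplePolygon v) {i j : ZMod n}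
    (h : midpoint ℝ (v i) (v (i + 1)) ∈ segment ℝ (v j) (v (j + 1))) : j = i :=
  hP.eq_of_mem_segment (midpoint_mem_segment _ _) h
    (fun h' => hP.2.1 i ((midpoint_eq_left_iff ℝ).mp h'))
    (fun h' => hP.2.1 i ((midpoint_eq_right_iff ℝ).mp h'))

lemma lineMap_image_subset_polygonSet_diff_midpoint {i : ZMod n} (hv : v i ≠ v (i + 1))
    {T : Set ℝ} (hT : T ⊆ Icc 0 1) (hT' : 2⁻¹ ∉ T) :
    AffineMap.lineMap (v i) (v (i + 1)) '' T ⊆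
      polygonSet v \ {midpoint ℝ (v i) (v (i + 1))} := by
  rintro _ ⟨r, hr, rfl⟩
  refine ⟨mem_iUnion.2 ⟨i, ?_⟩, fun h => hT' ?_⟩
  · rw [segment_eq_image_lineMap]; exact mem_image_of_mem _ (hT hr)
  · have : AffineMap.lineMap (v i) (v (i + 1)) r =
        AffineMap.lineMap (v i) (v (i + 1)) (2⁻¹ : ℝ) := by
      rw [h, midpoint, invOf_eq_inv]
    rwa [← AffineMap.lineMap_injective ℝ hv this]

lemma segment_subset_polygonSet_diff_midpoint {i j : ZMod n}
    (hi : ∀ j, midpoint ℝ (v i) (v (i + 1)) ∈ segment ℝ (v j) (v (j + 1)) → j = i)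
    (hj : j ≠ i) :
    segment ℝ (v j) (v (j + 1)) ⊆ polygonSet v \ {midpoint ℝ (v i) (v (i + 1))} :=
  fun _ hx => ⟨mem_iUnion.2 ⟨j, hx⟩, fun h => hj (hi j (h ▸ hx))⟩

lemma lineMap_mem_connectedComponentIn_diff_midpoint [NeZero n] {i : ZMod n}
    (hv : v i ≠ v (i + 1))
    (hi : ∀ j, midpoint ℝ (v i) (v (i + 1)) ∈ segment ℝ (v j) (v (j + 1)) → j = i)
    {s s' : ℝ} (hs : s ∈ Ico 0 2⁻¹) (hs' : s' ∈ Ioc 2⁻¹ 1) :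
    AffineMap.lineMap (v i) (v (i + 1)) s ∈
      connectedComponentIn (polygonSet v \ {midpoint ℝ (v i) (v (i + 1))})
        (AffineMap.lineMap (v i) (v (i + 1)) s') := by
  set L : ℝ →ᵃ[ℝ] Pt := AffineMap.lineMap (v i) (v (i + 1))
  have hn : 1 < n := by
    by_contra h
    obtain rfl : n = 1 := by have := NeZero.ne n; omega
    exact hv (congrArg v (Subsingleton.elim _ _))
  set C := ⋃ j ∈ Ico 1 n, segment ℝ (v (i + (j : ℕ))) (v (i + ((j + 1 : ℕ) : ZMod n)))
  have hC : C ⊆ polygonSet v \ {midpoint ℝ (v i) (v (i + 1))} := by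
    simp only [C, iUnion_subset_iff, mem_Ico, Nat.cast_succ, ← add_assoc]
    refine fun j hj => segment_subset_polygonSet_diff_midpoint hi fun h => ?_
    rw [add_eq_left, ZMod.natCast_eq_zero_iff] at h
    exact absurd (Nat.le_of_dvd (by omega) h) (by omega)
  have hq : v (i + 1) ∈ C ∩ L '' Ioc 2⁻¹ 1 :=
    ⟨mem_biUnion (x := 1) ⟨le_rfl, hn⟩ (by simpa using left_mem_segment ℝ _ _),
      1, ⟨by norm_num, le_rfl⟩, AffineMap.lineMap_apply_one _ _⟩
  have hp : v i ∈ C ∩ L '' Ico 0 2⁻¹ := by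
    refine ⟨mem_biUnion (x := n - 1) ⟨by omega, by omega⟩ ?_, 0, ⟨le_rfl, by norm_num⟩,
      AffineMap.lineMap_apply_zero _ _⟩
    rw [Nat.sub_add_cancel (by omega), ZMod.natCast_self, add_zero]
    exact right_mem_segment ℝ _ _
  have hconn : IsPreconnected (L '' Ioc 2⁻¹ 1 ∪ C ∪ L '' Ico 0 2⁻¹) :=
    ((isPreconnected_Ioc.image _ AffineMap.lineMap_continuous.continuousOn).union _ hq.2 hq.1
      (isPreconnected_biUnion_segment (fun j => v (i + j)) 1 n)).union _ (Or.inr hp.1) hp.2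
      (isPreconnected_Ico.image _ AffineMap.lineMap_continuous.continuousOn)
  refine hconn.subset_connectedComponentIn (Or.inl (Or.inl (mem_image_of_mem _ hs')))
    (union_subset (union_subset ?_ hC) ?_) (Or.inr (mem_image_of_mem _ hs))
  · exact lineMap_image_subset_polygonSet_diff_midpoint hv
      (Ioc_subset_Icc_self.trans (Icc_subset_Icc_left (by norm_num))) fun h => lt_irrefl _ h.1
  · exact lineMap_image_subset_polygonSet_diff_midpoint hv
      (Ico_subset_Icc_self.trans (Icc_subset_Icc_right (by norm_num))) fun h => lt_irrefl _ h.2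

end Connectedness

/-- Every simple polygon has an inscribed right isosceles triangle. -/
theorem inscribed_right_isosceles_triangle {n : ℕ} (v : ZMod n → Pt)
    (hP : IsSimplePolygon v) :
    ∃ y z u : Pt, y ∈ polygonSet v ∧ z ∈ polygonSet v ∧ u ∈ polygonSet v ∧
      y ≠ z ∧ y ≠ u ∧ z ≠ u ∧ ‖z - y‖ = ‖u - y‖ ∧ ⟪z - y, u - y⟫ = 0 := by
  have : NeZero n := ⟨by have := hP.1; omega⟩
  set a := midpoint ℝ (v 0) (v (0 + 1)) with ha_def
  have ha : ∀ j, a ∈ segment ℝ (v j) (v (j + 1)) → j = 0 := fun _ => hP.eq_of_midpoint_mem_segment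
  suffices ∃ z ∈ polygonSet v, z ≠ a ∧ a + rotCCW (z - a) ∈ polygonSet v by
    obtain ⟨z, hz, hza, hu⟩ := this
    exact ⟨a, z, _, mem_iUnion.2 ⟨0, midpoint_mem_segment _ _⟩, hz, hu,
      right_isosceles_rotCCW hza⟩
  by_contra! hoff
  obtain ⟨t, ht⟩ := exists_shearCoord_ne hP.2.1
  have hR : Continuous fun z => a + rotCCW (z - a) := by fun_prop
  have hcont : ContinuousOn (fun z => crossingParity v t (a + rotCCW (z - a)))
      (polygonSet v \ {a}) := fun z hz =>
    ((continuousAt_crossingParity ht (hoff z hz.1 hz.2)).comp (f := fun z => a + rotCCW (z - a))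
      hR.continuousAt).continuousWithinAt
  obtain ⟨μ, hflip, hμ, hμ'⟩ := ((eventually_crossingParity_midpoint_ne ht ha).and
    (Ioo_mem_nhdsGT (by norm_num : (0 : ℝ) < 2⁻¹))).exists
  have hcomp := lineMap_mem_connectedComponentIn_diff_midpoint (hP.2.1 0) ha
    (s := 2⁻¹ - μ) (s' := 2⁻¹ + μ) ⟨by linarith, by linarith⟩
    ⟨by linarith, by linarith⟩
  have hconst := isPreconnected_connectedComponentIn.constant
    (hcont.mono (connectedComponentIn_subset _ _))
    (mem_connectedComponentIn (connectedComponentIn_nonempty_iff.mp ⟨_, hcomp⟩)) hcomp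
  simp only [ha_def, midpoint_add_rotCCW_lineMap_sub, add_sub_cancel_left, sub_sub_cancel_left,
    neg_smul, ← sub_eq_add_neg] at hconst
  exact hflip hconst
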